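/- arXiv:1702.06462 — 2 statements merged into one kernel-verified Lean document; each statement's English description precedes it below -/
import Mathlib

section
/- In any knot mosaic, the number of entry points between any two adjacent rows is even. Formally: if each tile in an n×n grid is assigned a subset of its four edge-midpoints (its connection points) of even cardinality (each of the 11 mosaic tiles has 0, 2, or 4 connection points), and the mosaic is suitably connected (a midpoint on a shared edge of two adjacent tiles is a connection point of one tile iff it is a connection point of the other, and boundary edge-midpoints of the grid are never connection points), then for each k the number of grid positions on the boundary between row k and row k+1 that carry a connection point is even. -/
/-- A mosaic tile, recording which of its four edge midpoints are connection points. -/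
structure MosaicTile where
  top : Bool
  bottom : Bool
  left : Bool
  right : Bool

/-- The number of connection points of a tile. -/
def MosaicTile.count (t : MosaicTile) : ℕ :=
  (if t.top then 1 else 0) + (if t.bottom then 1 else 0) +
    (if t.left then 1 else 0) + (if t.right then 1 else 0)

/-- In a suitably connected mosaic, the number of entry points between any two
adjacent rows is even. -/
theorem even_entry_points_between_rows (n : ℕ) (M : ℕ → ℕ → MosaicTile)
    (heven : ∀ i j, i < n → j < n → Even (M i j).count)
    (hvert : ∀ i j, i + 1 < n → j < n → (M i j).bottom = (M (i + 1) j).top)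
    (hhorz : ∀ i j, i < n → j + 1 < n → (M i j).right = (M i (j + 1)).left)
    (htopbd : ∀ j, j < n → (M 0 j).top = false)
    (hbotbd : ∀ j, j < n → (M (n - 1) j).bottom = false)
    (hleftbd : ∀ i, i < n → (M i 0).left = false)
    (hrightbd : ∀ i, i < n → (M i (n - 1)).right = false)
    (k : ℕ) (hk : k + 1 < n) :
    Even ((Finset.range n).filter (fun j => (M k j).bottom = true)).card := by
  -- abbreviations
  set T : ℕ → ℕ := fun i => ∑ j ∈ Finset.range n, (if (M i j).top then 1 else 0) with hT
  set B : ℕ → ℕ := fun i => ∑ j ∈ Finset.range n, (if (M i j).bottom then 1 else 0) with hB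
  -- the filter card equals B k
  have hcard : ((Finset.range n).filter (fun j => (M k j).bottom = true)).card = B k := by
    rw [Finset.card_filter]
  rw [hcard]
  obtain ⟨m, rfl⟩ : ∃ m, n = m + 1 := ⟨n - 1, (Nat.succ_pred_eq_of_pos (by omega)).symm⟩
  -- key row parity lemma: Even (T i + B i) for i < n
  have hrow : ∀ i, i < m + 1 → Even (T i + B i) := by
    intro i hi
    have hlr : (∑ j ∈ Finset.range (m+1), (if (M i j).left then 1 else 0)) =
        ∑ j ∈ Finset.range (m+1), (if (M i j).right then 1 else 0) := by
      rw [Finset.sum_range_succ' (fun j => if (M i j).left then 1 else 0),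
        Finset.sum_range_succ (fun j => if (M i j).right then 1 else 0)]
      have h0 : (M i 0).left = false := hleftbd i hi
      have hm : (M i m).right = false := by
        have := hrightbd i hi; simpa using this
      rw [h0, hm]
      simp only [Bool.false_eq_true, if_false, add_zero]
      apply Finset.sum_congr rfl
      intro j hj
      rw [Finset.mem_range] at hj
      rw [← hhorz i j hi (by omega)]
    have hsum : Even (∑ j ∈ Finset.range (m+1), (M i j).count) := by
      apply Finset.even_sum
      intro j hj
      exact heven i j hi (Finset.mem_range.mp hj)
    have hsplit : (∑ j ∈ Finset.range (m+1), (M i j).count) =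
        (T i + B i) + ((∑ j ∈ Finset.range (m+1), (if (M i j).left then 1 else 0)) +
          (∑ j ∈ Finset.range (m+1), (if (M i j).right then 1 else 0))) := by
      simp only [hT, hB, MosaicTile.count, ← Finset.sum_add_distrib]
      apply Finset.sum_congr rfl
      intro j _
      ring
    rw [hsplit] at hsum
    have hlre : Even ((∑ j ∈ Finset.range (m+1), (if (M i j).left then 1 else 0)) +
        (∑ j ∈ Finset.range (m+1), (if (M i j).right then 1 else 0))) := by
      rw [hlr]; exact Even.add_self _
    exact (Nat.even_add.mp hsum).mpr hlre
  -- induction on rows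
  have main : ∀ i, i < m + 1 → Even (B i) := by
    intro i
    induction i with
    | zero =>
      intro hi
      have hT0 : T 0 = 0 := by
        simp only [hT]
        apply Finset.sum_eq_zero
        intro j hj
        rw [htopbd j (Finset.mem_range.mp hj)]
        rfl
      have := hrow 0 hi
      rwa [hT0, zero_add] at this
    | succ i ih =>
      intro hi
      have hTB : T (i + 1) = B i := by
        simp only [hT, hB]
        apply Finset.sum_congr rfl
        intro j hj
        rw [hvert i j hi (Finset.mem_range.mp hj)]
      have h1 := hrow (i + 1) hi
      rw [hTB] at h1
      have h2 : Even (B i) := ih (by omega)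
      exact (Nat.even_add.mp h1).mp h2
  exact main k (by omega)
end

section
/- In a suitably connected mosaic, if a row contains at least one non-blank tile, then it contains at least two non-blank tiles. Formally: under the even-connection-point model of mosaics, a tile is non-blank iff it has at least one connection point; if some tile in row k is non-blank, then at least two tiles in row k are non-blank. -/
lemma MosaicTile.count_zero {t : MosaicTile} (h : t.count = 0) :
    t.top = false ∧ t.bottom = false ∧ t.left = false ∧ t.right = false := by
  unfold MosaicTile.count at h
  cases ht : t.top <;> cases hb : t.bottom <;> cases hl : t.left <;> cases hr : t.right <;>
    simp_all

/-- In each row, the number of left connection points equals the number of right ones. -/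
lemma sumLR (n : ℕ) (M : ℕ → ℕ → MosaicTile)
    (hhorz : ∀ i j, i < n → j + 1 < n → (M i j).right = (M i (j + 1)).left)
    (hleftbd : ∀ i, i < n → (M i 0).left = false)
    (hrightbd : ∀ i, i < n → (M i (n - 1)).right = false)
    (i : ℕ) (hi : i < n) :
    (∑ j ∈ Finset.range n, (if (M i j).left then 1 else 0)) =
      ∑ j ∈ Finset.range n, (if (M i j).right then 1 else 0) := by
  obtain ⟨m, rfl⟩ : ∃ m, n = m + 1 := ⟨n - 1, by omega⟩
  rw [Finset.sum_range_succ' (fun j => (if (M i j).left then 1 else 0)) m,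
    Finset.sum_range_succ (fun j => (if (M i j).right then 1 else 0)) m]
  have h0 : (M i 0).left = false := hleftbd i hi
  have hm : (M i m).right = false := by simpa using hrightbd i hi
  rw [h0, hm]
  simp only [Bool.false_eq_true, if_false, add_zero]
  apply Finset.sum_congr rfl
  intro j hj
  rw [Finset.mem_range] at hj
  rw [← hhorz i j hi (by omega)]

/-- The number of top connection points of each row is even. -/
lemma topEven (n : ℕ) (M : ℕ → ℕ → MosaicTile)
    (hcard : ∀ i j, i < n → j < n →
      (M i j).count = 0 ∨ (M i j).count = 2 ∨ (M i j).count = 4)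
    (hvert : ∀ i j, i + 1 < n → j < n → (M i j).bottom = (M (i + 1) j).top)
    (hhorz : ∀ i j, i < n → j + 1 < n → (M i j).right = (M i (j + 1)).left)
    (htopbd : ∀ j, j < n → (M 0 j).top = false)
    (hleftbd : ∀ i, i < n → (M i 0).left = false)
    (hrightbd : ∀ i, i < n → (M i (n - 1)).right = false) :
    ∀ i, i < n → Even (∑ j ∈ Finset.range n, (if (M i j).top then 1 else 0)) := by
  have hrow : ∀ i, i < n →
      Even ((∑ j ∈ Finset.range n, (if (M i j).top then 1 else 0)) +
        ∑ j ∈ Finset.range n, (if (M i j).bottom then 1 else 0)) := by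
    intro i hi
    have hsum : (∑ j ∈ Finset.range n, (M i j).count) =
        (∑ j ∈ Finset.range n, (if (M i j).top then 1 else 0)) +
        (∑ j ∈ Finset.range n, (if (M i j).bottom then 1 else 0)) +
        (∑ j ∈ Finset.range n, (if (M i j).left then 1 else 0)) +
        (∑ j ∈ Finset.range n, (if (M i j).right then 1 else 0)) := by
      unfold MosaicTile.count
      rw [Finset.sum_add_distrib, Finset.sum_add_distrib, Finset.sum_add_distrib]
    have hES : Even (∑ j ∈ Finset.range n, (M i j).count) := by
      apply Finset.even_sum
      intro j hj
      rcases hcard i j hi (Finset.mem_range.mp hj) with h | h | h <;> rw [h] <;> decide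
    have hLR := sumLR n M hhorz hleftbd hrightbd i hi
    rcases hES with ⟨c, hc⟩
    exact ⟨c - (∑ j ∈ Finset.range n, (if (M i j).left then 1 else 0)), by omega⟩
  intro i
  induction i with
  | zero =>
    intro _
    have : (∑ j ∈ Finset.range n, (if (M 0 j).top then 1 else 0)) = 0 := by
      apply Finset.sum_eq_zero
      intro j hj
      rw [htopbd j (Finset.mem_range.mp hj)]
      rfl
    rw [this]; exact Even.zero
  | succ i ih =>
    intro hi
    have hi' : i < n := by omega
    have hT := ih hi'
    have heq : (∑ j ∈ Finset.range n, (if (M (i + 1) j).top then 1 else 0)) =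
        ∑ j ∈ Finset.range n, (if (M i j).bottom then 1 else 0) :=
      Finset.sum_congr rfl fun j hj => by rw [← hvert i j hi (Finset.mem_range.mp hj)]
    rw [heq]
    rcases hT with ⟨a, ha⟩
    rcases hrow i hi' with ⟨b, hb⟩
    exact ⟨b - a, by omega⟩

/-- In a suitably connected mosaic, an occupied row (one containing a non-blank
tile, i.e. a tile with at least one connection point) contains at least two
non-blank tiles. -/
theorem occupied_row_has_two_nonblank (n : ℕ) (M : ℕ → ℕ → MosaicTile)
    (hcard : ∀ i j, i < n → j < n →
      (M i j).count = 0 ∨ (M i j).count = 2 ∨ (M i j).count = 4)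
    (hvert : ∀ i j, i + 1 < n → j < n → (M i j).bottom = (M (i + 1) j).top)
    (hhorz : ∀ i j, i < n → j + 1 < n → (M i j).right = (M i (j + 1)).left)
    (htopbd : ∀ j, j < n → (M 0 j).top = false)
    (hbotbd : ∀ j, j < n → (M (n - 1) j).bottom = false)
    (hleftbd : ∀ i, i < n → (M i 0).left = false)
    (hrightbd : ∀ i, i < n → (M i (n - 1)).right = false)
    (k : ℕ) (hk : k < n)
    (hocc : ∃ j, j < n ∧ (M k j).count ≠ 0) :
    2 ≤ ((Finset.range n).filter (fun j => (M k j).count ≠ 0)).card := by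
  by_contra hlt
  push_neg at hlt
  obtain ⟨j0, hj0n, hj0⟩ := hocc
  have hj0F : j0 ∈ (Finset.range n).filter (fun j => (M k j).count ≠ 0) :=
    Finset.mem_filter.mpr ⟨Finset.mem_range.mpr hj0n, hj0⟩
  -- every other tile in row k is blank
  have hblank : ∀ j, j < n → j ≠ j0 → (M k j).count = 0 := by
    intro j hjn hne
    by_contra hne0
    have hjF : j ∈ (Finset.range n).filter (fun j => (M k j).count ≠ 0) :=
      Finset.mem_filter.mpr ⟨Finset.mem_range.mpr hjn, hne0⟩
    have : 1 < ((Finset.range n).filter (fun j => (M k j).count ≠ 0)).card :=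
      Finset.one_lt_card.mpr ⟨j, hjF, j0, hj0F, hne⟩
    omega
  -- left edge of j0 is false
  have hl : (M k j0).left = false := by
    rcases Nat.eq_zero_or_pos j0 with h0 | hpos
    · subst h0; exact hleftbd k hk
    · have hb := (MosaicTile.count_zero (hblank (j0 - 1) (by omega) (by omega))).2.2.2
      have hh := hhorz k (j0 - 1) hk (by omega)
      rw [show j0 - 1 + 1 = j0 by omega] at hh
      rw [← hh, hb]
  -- right edge of j0 is false
  have hr : (M k j0).right = false := by
    rcases eq_or_lt_of_le (by omega : j0 + 1 ≤ n) with h0 | hlt'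
    · have : j0 = n - 1 := by omega
      rw [this]; exact hrightbd k hk
    · have hb := (MosaicTile.count_zero (hblank (j0 + 1) hlt' (by omega))).2.2.1
      rw [hhorz k j0 hk hlt', hb]
  -- hence top and bottom of j0 are true
  have htb : (M k j0).top = true ∧ (M k j0).bottom = true := by
    have hc := hcard k j0 hk hj0n
    unfold MosaicTile.count at hc hj0
    rw [hl, hr] at hc
    cases ht : (M k j0).top <;> cases hb : (M k j0).bottom <;> simp_all
  -- k > 0 since top of row 0 is false
  have hkpos : 0 < k := by
    rcases Nat.eq_zero_or_pos k with h0 | h; · rw [h0] at htb; simp [htopbd j0 hj0n] at htb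
    exact h
  -- number of top connection points in row k equals 1
  have hT1 : (∑ j ∈ Finset.range n, (if (M k j).top then 1 else 0)) = 1 := by
    rw [Finset.sum_eq_single j0]
    · rw [htb.1]; rfl
    · intro j hj hne
      rw [(MosaicTile.count_zero (hblank j (Finset.mem_range.mp hj) hne)).1]
      rfl
    · intro h; exact absurd (Finset.mem_range.mpr hj0n) h
  have hE := topEven n M hcard hvert hhorz htopbd hleftbd hrightbd k hk
  rw [hT1] at hE
  exact (Nat.not_even_iff_odd.mpr odd_one) hE
end
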